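/- arXiv:2210.07011 — 2 statements merged into one kernel-verified Lean document; each statement's English description precedes it below -/
import Mathlib

section
/- Variational lower bound on mutual information (Barber–Agakov bound): for jointly distributed finite random variables X and Z, and any conditional probability kernel q(x|z) with q(x|z) > 0 whenever p(x,z) > 0, I(X;Z) ≥ H(X) + E_{p(x,z)}[log q(x|z)] ≥ E_{p(x,z)}[log q(x|z)]; hence maximizing the expected log-likelihood of a variational decoder maximizes a lower bound of the mutual information. -/
/-- Barber–Agakov variational lower bound on mutual information:
I(X;Z) ≥ H(X) + E_{p(x,z)}[log q(x|z)] ≥ E_{p(x,z)}[log q(x|z)]. -/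
theorem stmt9 {ΩX ΩZ : Type*} [Fintype ΩX] [Fintype ΩZ]
    (p : ΩX → ΩZ → ℝ) (hp0 : ∀ x z, 0 ≤ p x z) (hp1 : ∑ x, ∑ z, p x z = 1)
    (q : ΩZ → ΩX → ℝ) (hq0 : ∀ z x, 0 ≤ q z x) (hq1 : ∀ z, ∑ x, q z x = 1)
    (hsupp : ∀ x z, 0 < p x z → 0 < q z x) :
    let pX : ΩX → ℝ := fun x => ∑ z, p x z
    let pZ : ΩZ → ℝ := fun z => ∑ x, p x z
    let I : ℝ := ∑ x, ∑ z, p x z * Real.log (p x z / (pX x * pZ z))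
    let HX : ℝ := -∑ x, pX x * Real.log (pX x)
    let E : ℝ := ∑ x, ∑ z, p x z * Real.log (q z x)
    HX + E ≤ I ∧ E ≤ HX + E := by
  intro pX pZ I HX E
  have hpX0 : ∀ x, 0 ≤ pX x := fun x => Finset.sum_nonneg fun z _ => hp0 x z
  have hpZ0 : ∀ z, 0 ≤ pZ z := fun z => Finset.sum_nonneg fun x _ => hp0 x z
  have hppX : ∀ x z, p x z ≤ pX x := fun x z =>
    Finset.single_le_sum (fun z' _ => hp0 x z') (Finset.mem_univ z)
  have hppZ : ∀ x z, p x z ≤ pZ z := fun x z =>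
    Finset.single_le_sum (fun x' _ => hp0 x' z) (Finset.mem_univ x)
  have hHX : 0 ≤ HX := by
    have h : ∑ x, pX x * Real.log (pX x) ≤ 0 := by
      apply Finset.sum_nonpos
      intro x _
      apply mul_nonpos_of_nonneg_of_nonpos (hpX0 x)
      apply Real.log_nonpos (hpX0 x)
      calc pX x ≤ ∑ x', pX x' :=
            Finset.single_le_sum (fun x' _ => hpX0 x') (Finset.mem_univ x)
        _ = 1 := hp1
    simpa [HX] using neg_nonneg.mpr h
  refine ⟨?_, by linarith⟩
  have hHXeq : ∑ x, pX x * Real.log (pX x) = ∑ x, ∑ z, p x z * Real.log (pX x) :=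
    Finset.sum_congr rfl fun x _ => Finset.sum_mul ..
  have h1 : HX + E - I = ∑ x, ∑ z, (p x z * Real.log (q z x)
      - p x z * Real.log (pX x) - p x z * Real.log (p x z / (pX x * pZ z))) := by
    simp only [Finset.sum_sub_distrib]
    simp only [HX, E, I, hHXeq]
    ring
  have h2 : ∀ x z, (p x z * Real.log (q z x)
      - p x z * Real.log (pX x) - p x z * Real.log (p x z / (pX x * pZ z)))
      = p x z * Real.log (pZ z * q z x / p x z) := by
    intro x z
    rcases eq_or_lt_of_le (hp0 x z) with h | h
    · simp [← h]
    · have hq := hsupp x z h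
      have hX : 0 < pX x := lt_of_lt_of_le h (hppX x z)
      have hZ : 0 < pZ z := lt_of_lt_of_le h (hppZ x z)
      rw [Real.log_div h.ne' (by positivity), Real.log_mul hX.ne' hZ.ne',
        Real.log_div (by positivity) h.ne', Real.log_mul hZ.ne' hq.ne']
      ring
  have h3 : ∑ x, ∑ z, p x z * Real.log (pZ z * q z x / p x z)
      ≤ ∑ x, ∑ z, (pZ z * q z x - p x z) := by
    refine Finset.sum_le_sum fun x _ => Finset.sum_le_sum fun z _ => ?_
    rcases eq_or_lt_of_le (hp0 x z) with h | h
    · simp only [← h, zero_mul, sub_zero]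
      exact mul_nonneg (hpZ0 z) (hq0 z x)
    · have ht : 0 < pZ z * q z x / p x z := by
        have := hsupp x z h
        have := lt_of_lt_of_le h (hppZ x z)
        positivity
      calc p x z * Real.log (pZ z * q z x / p x z)
          ≤ p x z * (pZ z * q z x / p x z - 1) := by
            exact mul_le_mul_of_nonneg_left (Real.log_le_sub_one_of_pos ht) (hp0 x z)
        _ = pZ z * q z x - p x z := by field_simp
  have h4 : ∑ x, ∑ z, (pZ z * q z x - p x z) = 0 := by
    simp only [Finset.sum_sub_distrib]
    have hA : ∑ x, ∑ z, pZ z * q z x = 1 := by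
      rw [Finset.sum_comm]
      calc ∑ z, ∑ x, pZ z * q z x = ∑ z, pZ z * ∑ x, q z x := by
            simp [Finset.mul_sum]
        _ = ∑ z, pZ z := by simp [hq1]
        _ = ∑ x, ∑ z, p x z := Finset.sum_comm
        _ = 1 := hp1
    rw [hA, hp1]
    ring
  have h5 : HX + E - I ≤ 0 := by
    rw [h1]
    calc ∑ x, ∑ z, (p x z * Real.log (q z x)
          - p x z * Real.log (pX x) - p x z * Real.log (p x z / (pX x * pZ z)))
        = ∑ x, ∑ z, p x z * Real.log (pZ z * q z x / p x z) := by
          exact Finset.sum_congr rfl fun x _ => Finset.sum_congr rfl fun z _ => h2 x z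
      _ ≤ ∑ x, ∑ z, (pZ z * q z x - p x z) := h3
      _ = 0 := h4
  linarith
end

section
/- The binary-concrete sample is a valid relaxation: if U ~ Uniform(0,1), α ∈ ℝ, τ > 0, and s = σ((log U − log(1−U) + α)/τ) where σ is the sigmoid function, then s ∈ (0,1) almost surely, and as τ → 0⁺ the random variable s converges in distribution to a Bernoulli random variable with success probability σ(α), i.e., P(s > 1/2) = σ(α) for every τ > 0 and lim_{τ→0} P(s > t) = σ(α) for every t ∈ (0,1). -/
/-! The logit of a uniform variable on `(0, 1)` is standard logistic: `P(logit U > c) = σ(-c)`.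
Since `σ` is increasing with inverse `logit` on `(0, 1)`, the event `s > t` is the event
`logit U > τ logit t - α`, so `P(s > t) = σ(α - τ logit t)`. This is `σ(α)` at `t = 1/2`, where
`logit t = 0`, and tends to `σ(α)` as `τ → 0` by continuity of `σ`. -/

open MeasureTheory Set Filter Topology

noncomputable def sigmoid (x : ℝ) : ℝ := 1 / (1 + Real.exp (-x))

theorem sigmoid_eq_real_sigmoid : sigmoid = Real.sigmoid :=
  funext fun _ => one_div _

noncomputable def logit (y : ℝ) : ℝ := Real.log y - Real.log (1 - y)

theorem logit_half : logit (1 / 2) = 0 := by norm_num [logit]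

theorem sigmoid_logit {y : ℝ} (hy : y ∈ Ioo (0 : ℝ) 1) : Real.sigmoid (logit y) = y := by
  have hy₀ : 0 < y := hy.1
  have hy₁ : 0 < 1 - y := sub_pos.2 hy.2
  rw [Real.sigmoid_def, logit, neg_sub, Real.exp_sub, Real.exp_log hy₁, Real.exp_log hy₀]
  field_simp
  ring

theorem lt_sigmoid_iff_logit_lt {t : ℝ} (ht : t ∈ Ioo (0 : ℝ) 1) (x : ℝ) :
    t < Real.sigmoid x ↔ logit t < x := by
  nth_rw 1 [← sigmoid_logit ht]
  exact Real.sigmoid_lt_iff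

theorem lt_logit_iff_sigmoid_lt {u : ℝ} (hu : u ∈ Ioo (0 : ℝ) 1) (c : ℝ) :
    c < logit u ↔ Real.sigmoid c < u := by
  rw [← Real.sigmoid_lt_iff, sigmoid_logit hu]

theorem restrict_Ioo_setOf_lt_logit (c : ℝ) :
    volume.restrict (Ioo (0 : ℝ) 1) {u | c < logit u} = ENNReal.ofReal (Real.sigmoid (-c)) := by
  have hset : {u | c < logit u} ∩ Ioo 0 1 = Ioo (Real.sigmoid c) 1 := by
    ext u
    refine ⟨fun ⟨hc, hu⟩ => ⟨(lt_logit_iff_sigmoid_lt hu c).1 hc, hu.2⟩, fun ⟨hc, hu⟩ => ?_⟩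
    have hu' : u ∈ Ioo (0 : ℝ) 1 := ⟨(Real.sigmoid_pos c).trans hc, hu⟩
    exact ⟨(lt_logit_iff_sigmoid_lt hu' c).2 hc, hu'⟩
  rw [Measure.restrict_apply' measurableSet_Ioo, hset, Real.volume_Ioo, Real.sigmoid_neg]

theorem restrict_Ioo_setOf_lt_sigmoid_logit {α τ t : ℝ} (hτ : 0 < τ) (ht : t ∈ Ioo (0 : ℝ) 1) :
    (volume.restrict (Ioo (0 : ℝ) 1) {u | t < Real.sigmoid ((logit u + α) / τ)}).toReal =
      Real.sigmoid (α - τ * logit t) := by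
  have hset : {u | t < Real.sigmoid ((logit u + α) / τ)} ∩ Ioo 0 1 =
      {u | τ * logit t - α < logit u} ∩ Ioo 0 1 := by
    ext u
    simp only [mem_inter_iff, mem_ofPred_eq, lt_sigmoid_iff_logit_lt ht, lt_div_iff₀ hτ]
    constructor <;> rintro ⟨h, hu⟩ <;> exact ⟨by linarith, hu⟩
  rw [Measure.restrict_apply' measurableSet_Ioo, hset, ← Measure.restrict_apply' measurableSet_Ioo,
    restrict_Ioo_setOf_lt_logit, neg_sub, ENNReal.toReal_ofReal (Real.sigmoid_nonneg _)]

/-- The binary-concrete sample s = σ((log U − log(1−U) + α)/τ) with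
U ~ Uniform(0,1) lies in (0,1), satisfies P(s > 1/2) = σ(α) for every τ > 0, and
P(s > t) → σ(α) as τ → 0⁺ for every t ∈ (0,1). -/
theorem stmt13 (α : ℝ) :
    let μ := volume.restrict (Set.Ioo (0 : ℝ) 1)
    let s : ℝ → ℝ → ℝ := fun τ u =>
      sigmoid ((Real.log u - Real.log (1 - u) + α) / τ)
    (∀ τ > (0 : ℝ), ∀ u ∈ Set.Ioo (0 : ℝ) 1, s τ u ∈ Set.Ioo (0 : ℝ) 1)
    ∧ (∀ τ > (0 : ℝ), (μ {u | 1 / 2 < s τ u}).toReal = sigmoid α)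
    ∧ (∀ t ∈ Set.Ioo (0 : ℝ) 1,
        Filter.Tendsto (fun τ => (μ {u | t < s τ u}).toReal)
          (nhdsWithin 0 (Set.Ioi 0)) (nhds (sigmoid α))) := by
  intro μ s
  have htail : ∀ τ > (0 : ℝ), ∀ t ∈ Ioo (0 : ℝ) 1,
      (μ {u | t < s τ u}).toReal = Real.sigmoid (α - τ * logit t) := fun τ hτ t ht => by
    simp only [s, sigmoid_eq_real_sigmoid]
    exact restrict_Ioo_setOf_lt_sigmoid_logit hτ ht
  rw [sigmoid_eq_real_sigmoid]
  refine ⟨fun τ _ u _ => ?_, fun τ hτ => ?_, fun t ht => ?_⟩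
  · simp only [s, sigmoid_eq_real_sigmoid]
    exact ⟨Real.sigmoid_pos _, Real.sigmoid_lt_one _⟩
  · simpa only [logit_half, mul_zero, sub_zero] using htail τ hτ (1 / 2) ⟨by norm_num, by norm_num⟩
  · have hcont : Tendsto (fun τ => Real.sigmoid (α - τ * logit t)) (𝓝 0) (𝓝 (Real.sigmoid α)) := by
      have h : Continuous fun τ => Real.sigmoid (α - τ * logit t) := by fun_prop
      simpa only [zero_mul, sub_zero] using h.tendsto 0
    refine (hcont.mono_left nhdsWithin_le_nhds).congr' ?_
    filter_upwards [self_mem_nhdsWithin] with τ hτ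
    exact (htail τ hτ t ht).symm
end
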